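/- arXiv:2111.04125 — 4 statements merged into one kernel-verified Lean document; each statement's English description precedes it below -/
import Mathlib

section
/- If a system of continuous functionals F₁,…,F_N : H → ℝ is asymptotically determining for a dynamical system S(t) on H, then the map F : H → ℝ^N, F(u) = (F₁(u),…,F_N(u)), is injective on the set R of equilibria of S(t). Consequently the determining dimension is at least the embedding dimension of R. -/
open Filter Topology

/-- If a finite system of continuous functionals `F₁,…,F_N` is asymptotically determining
for a semigroup `S(t)` on a Banach space `H`, then `u ↦ (F₁ u,…,F_N u)` is injective on the
set `R` of equilibria; consequently `R` embeds continuously and injectively into `ℝ^N`,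
so the determining dimension is at least the embedding dimension of `R`. -/
theorem determining_injective_on_equilibria
    {H : Type*} [NormedAddCommGroup H] [NormedSpace ℝ H] [CompleteSpace H]
    (S : ℝ → H → H)
    (hS0 : S 0 = id)
    (hSsem : ∀ t ≥ (0:ℝ), ∀ s ≥ (0:ℝ), S (t + s) = S t ∘ S s)
    {N : ℕ} (F : Fin N → H → ℝ) (hFcont : ∀ i, Continuous (F i))
    (hdet : ∀ u₀ v₀ : H,
      (∀ i, Tendsto (fun t => F i (S t u₀) - F i (S t v₀)) atTop (𝓝 0)) →
      Tendsto (fun t => ‖S t u₀ - S t v₀‖) atTop (𝓝 0))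
    (R : Set H) (hR : R = {u : H | ∀ t ≥ (0:ℝ), S t u = u}) :
    Set.InjOn (fun u => fun i => F i u) R ∧
      ∃ g : R → (Fin N → ℝ), Continuous g ∧ Function.Injective g := by
  subst hR
  have hinj : Set.InjOn (fun u => fun i => F i u) {u : H | ∀ t ≥ (0:ℝ), S t u = u} := by
    intro u hu v hv huv
    have hF : ∀ i, F i u = F i v := fun i => congrFun huv i
    have htend : Tendsto (fun t => ‖S t u - S t v‖) atTop (𝓝 0) := by
      apply hdet
      intro i
      have : (fun t => F i (S t u) - F i (S t v)) =ᶠ[atTop] (fun _ => 0) := by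
        filter_upwards [eventually_ge_atTop (0:ℝ)] with t ht
        rw [hu t ht, hv t ht, hF i, sub_self]
      exact (tendsto_congr' this).mpr tendsto_const_nhds
    have hconst : (fun t => ‖S t u - S t v‖) =ᶠ[atTop] (fun _ => ‖u - v‖) := by
      filter_upwards [eventually_ge_atTop (0:ℝ)] with t ht
      rw [hu t ht, hv t ht]
    have : Tendsto (fun _ : ℝ => ‖u - v‖) atTop (𝓝 0) :=
      (tendsto_congr' hconst).mp htend
    have h0 : ‖u - v‖ = 0 := (tendsto_nhds_unique this tendsto_const_nhds).symm
    exact sub_eq_zero.mp (norm_eq_zero.mp h0)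
  refine ⟨hinj, ⟨fun u => fun i => F i u.val, ?_, ?_⟩⟩
  · exact continuous_pi fun i => (hFcont i).comp continuous_subtype_val
  · intro x y hxy
    exact Subtype.ext (hinj x.2 y.2 hxy)
end

section
/- Let S(t) be a dissipative dynamical system on a Banach space H with global attractor A, such that every trajectory is continuous in time and the solution map u₀ ↦ S(·)u₀ is continuous from H to C_loc(ℝ₊, H). Then any finite system of continuous functionals that is separating on the attractor is asymptotically determining. -/
open Filter Topology

/-- If a sequence converges to a nonempty compact set `A` (in the sense that the distance
to `A` tends to zero), then along any ultrafilter extending `atTop` it converges to a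
point of `A`. -/
private lemma ulim_exists {H : Type*} [NormedAddCommGroup H] [CompleteSpace H]
    (𝒰 : Ultrafilter ℕ) (h𝒰 : (𝒰 : Filter ℕ) ≤ atTop)
    {A : Set H} (hA : IsCompact A) (hAne : A.Nonempty) (f : ℕ → H)
    (hf : Tendsto (fun n => Metric.infDist (f n) A) atTop (𝓝 0)) :
    ∃ x ∈ A, Tendsto f 𝒰 (𝓝 x) := by
  -- `A ∪ range f` is totally bounded
  have htb : TotallyBounded (A ∪ Set.range f) := by
    rw [Metric.totallyBounded_iff]
    intro ε hε
    obtain ⟨t, htf, htA⟩ := Metric.totallyBounded_iff.mp hA.totallyBounded (ε / 2)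
      (by positivity)
    have hev : ∀ᶠ n in atTop, Metric.infDist (f n) A < ε / 2 := by
      have : Set.Iio (ε / 2) ∈ 𝓝 (0 : ℝ) := Iio_mem_nhds (by positivity)
      exact hf.eventually this
    obtain ⟨M, hM⟩ := eventually_atTop.mp hev
    refine ⟨t ∪ f '' Set.Iio M, htf.union ((Set.finite_Iio M).image f), ?_⟩
    rintro x (hx | ⟨n, rfl⟩)
    · obtain ⟨y, hy, hxy⟩ := Set.mem_iUnion₂.mp (htA hx)
      exact Set.mem_iUnion₂.mpr ⟨y, Set.mem_union_left _ hy,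
        Metric.mem_ball.mpr (lt_of_lt_of_le (Metric.mem_ball.mp hxy) (by linarith))⟩
    · by_cases hn : n < M
      · exact Set.mem_iUnion₂.mpr ⟨f n, Set.mem_union_right _ ⟨n, hn, rfl⟩,
          Metric.mem_ball.mpr (by simpa using hε)⟩
      · have h1 : Metric.infDist (f n) A < ε / 2 := hM n (le_of_not_gt hn)
        obtain ⟨a, ha, hda⟩ := (Metric.infDist_lt_iff hAne).mp h1
        obtain ⟨y, hy, hay⟩ := Set.mem_iUnion₂.mp (htA ha)
        refine Set.mem_iUnion₂.mpr ⟨y, Set.mem_union_left _ hy, Metric.mem_ball.mpr ?_⟩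
        have := Metric.mem_ball.mp hay
        calc dist (f n) y ≤ dist (f n) a + dist a y := dist_triangle _ _ _
          _ < ε / 2 + ε / 2 := add_lt_add hda this
          _ = ε := by ring
  -- hence its closure is compact
  have hK : IsCompact (closure (A ∪ Set.range f)) :=
    TotallyBounded.isCompact_of_isClosed htb.closure isClosed_closure
  -- the ultrafilter image lives in this compact set
  have hle : (𝒰.map f : Filter H) ≤ 𝓟 (closure (A ∪ Set.range f)) := by
    rw [le_principal_iff]
    exact Filter.mem_map.mpr (Filter.Eventually.of_forall (f := (𝒰 : Filter ℕ)) fun n =>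
      subset_closure (Set.mem_union_right _ ⟨n, rfl⟩))
  obtain ⟨x, _, hx⟩ := hK.ultrafilter_le_nhds (𝒰.map f) hle
  have hxt : Tendsto f 𝒰 (𝓝 x) := hx
  -- the limit lies in `A`
  have h1 : Tendsto (fun n => Metric.infDist (f n) A) 𝒰 (𝓝 (Metric.infDist x A)) :=
    ((Metric.continuous_infDist_pt A).tendsto x).comp hxt
  have h2 : Tendsto (fun n => Metric.infDist (f n) A) 𝒰 (𝓝 0) := hf.mono_left h𝒰
  have h0 : Metric.infDist x A = 0 := tendsto_nhds_unique h1 h2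
  have hxA : x ∈ A := by
    have : x ∈ closure A := (Metric.mem_closure_iff_infDist_zero hAne).mpr h0
    rwa [hA.isClosed.closure_eq] at this
  exact ⟨x, hxA, hxt⟩

/-- For a dissipative dynamical system `S(t)` on a Banach space `H` possessing a global
attractor `A`, with trajectories continuous in time and the solution map continuous from
`H` to `C_loc(ℝ₊,H)` (encoded by joint continuity on `[0,∞) × H`), any finite system of
continuous functionals which is separating on the attractor is asymptotically determining. -/
theorem separating_on_attractor_implies_determining
    {H : Type*} [NormedAddCommGroup H] [NormedSpace ℝ H] [CompleteSpace H]
    (S : ℝ → H → H)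
    (hS0 : S 0 = id)
    (hSsem : ∀ t ≥ (0:ℝ), ∀ s ≥ (0:ℝ), S (t + s) = S t ∘ S s)
    (hScont : ContinuousOn (fun p : ℝ × H => S p.1 p.2) (Set.Ici 0 ×ˢ Set.univ))
    (hdis : ∃ C > (0:ℝ), ∃ a > (0:ℝ), ∃ Q : ℝ → ℝ, Monotone Q ∧
        ∀ u₀ : H, ∀ t ≥ (0:ℝ), ‖S t u₀‖ ≤ Q ‖u₀‖ * Real.exp (-a * t) + C)
    (A : Set H)
    (hAcomp : IsCompact A)
    (hAinv : ∀ t ≥ (0:ℝ), S t '' A = A)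
    (hAattr : ∀ B : Set H, Bornology.IsBounded B → ∀ O : Set H, IsOpen O → A ⊆ O →
        ∃ T : ℝ, ∀ t ≥ T, S t '' B ⊆ O)
    {N : ℕ} (F : Fin N → H → ℝ) (hFcont : ∀ i, Continuous (F i))
    (hsep : ∀ u v : ℝ → H, (∀ t, u t ∈ A) → (∀ t, v t ∈ A) →
        (∀ s : ℝ, ∀ t ≥ (0:ℝ), S t (u s) = u (s + t)) →
        (∀ s : ℝ, ∀ t ≥ (0:ℝ), S t (v s) = v (s + t)) →
        (∀ i, ∀ t : ℝ, F i (u t) = F i (v t)) → u = v) :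
    ∀ u₀ v₀ : H,
      (∀ i, Tendsto (fun t => F i (S t u₀) - F i (S t v₀)) atTop (𝓝 0)) →
      Tendsto (fun t => ‖S t u₀ - S t v₀‖) atTop (𝓝 0) := by
  intro u₀ v₀ hF
  by_contra hgoal
  -- the attractor is nonempty
  have hAne : A.Nonempty := by
    rcases Set.eq_empty_or_nonempty A with h | h
    · exfalso
      obtain ⟨T, hT⟩ := hAattr {u₀} Bornology.isBounded_singleton ∅ isOpen_empty
        (by simp [h])
      exact hT T le_rfl ⟨u₀, rfl, rfl⟩
    · exact h
  -- every trajectory approaches the attractor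
  have hdist : ∀ w : H, Tendsto (fun t : ℝ => Metric.infDist (S t w) A) atTop (𝓝 0) := by
    intro w
    rw [Metric.tendsto_nhds]
    intro ε hε
    obtain ⟨T, hT⟩ := hAattr {w} Bornology.isBounded_singleton (Metric.thickening ε A)
      Metric.isOpen_thickening (Metric.self_subset_thickening hε A)
    filter_upwards [eventually_ge_atTop T] with t ht
    have hm : S t w ∈ Metric.thickening ε A := hT t ht ⟨w, rfl, rfl⟩
    rw [Real.dist_eq, sub_zero, abs_of_nonneg Metric.infDist_nonneg]
    obtain ⟨a, ha, hda⟩ := Metric.mem_thickening_iff.mp hm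
    exact (Metric.infDist_lt_iff hAne).mpr ⟨a, ha, hda⟩
  -- extract a bad sequence of times
  have hexist : ∃ ε > (0:ℝ), ∀ T : ℝ, ∃ t ≥ T, ε ≤ ‖S t u₀ - S t v₀‖ := by
    by_contra hc
    push_neg at hc
    apply hgoal
    rw [Metric.tendsto_nhds]
    intro ε hε
    obtain ⟨T, hT⟩ := hc ε hε
    filter_upwards [eventually_ge_atTop T] with t ht
    rw [Real.dist_eq, sub_zero, abs_of_nonneg (norm_nonneg _)]
    exact hT t ht
  obtain ⟨ε, hε, hfreq⟩ := hexist
  choose φ hφge hφε using fun n : ℕ => hfreq (n : ℝ)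
  have hφtop : Tendsto φ atTop atTop :=
    tendsto_atTop_mono hφge tendsto_natCast_atTop_atTop
  -- fix an ultrafilter extending atTop
  set 𝒰 : Ultrafilter ℕ := Ultrafilter.of atTop with h𝒰def
  have h𝒰 : (𝒰 : Filter ℕ) ≤ atTop := Ultrafilter.of_le atTop
  -- limits along the ultrafilter define complete trajectories in A
  have hshift : ∀ s : ℝ, Tendsto (fun n => φ n + s) atTop atTop := fun s =>
    tendsto_atTop_add_const_right atTop s hφtop
  have hu : ∀ s : ℝ, ∃ x ∈ A, Tendsto (fun n => S (φ n + s) u₀) 𝒰 (𝓝 x) := fun s =>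
    ulim_exists 𝒰 h𝒰 hAcomp hAne _ ((hdist u₀).comp (hshift s))
  have hv : ∀ s : ℝ, ∃ x ∈ A, Tendsto (fun n => S (φ n + s) v₀) 𝒰 (𝓝 x) := fun s =>
    ulim_exists 𝒰 h𝒰 hAcomp hAne _ ((hdist v₀).comp (hshift s))
  choose u huA huT using hu
  choose v hvA hvT using hv
  -- the limiting curves are complete trajectories
  have key : ∀ (w₀ : H) (w : ℝ → H),
      (∀ s, Tendsto (fun n => S (φ n + s) w₀) 𝒰 (𝓝 (w s))) →
      ∀ s : ℝ, ∀ t ≥ (0:ℝ), S t (w s) = w (s + t) := by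
    intro w₀ w hw s t ht
    have hcw : ContinuousWithinAt (fun p : ℝ × H => S p.1 p.2)
        (Set.Ici 0 ×ˢ Set.univ) (t, w s) := hScont (t, w s) ⟨ht, trivial⟩
    have hpair : Tendsto (fun n => ((t, S (φ n + s) w₀) : ℝ × H)) 𝒰
        (𝓝[Set.Ici 0 ×ˢ Set.univ] (t, w s)) := by
      rw [tendsto_nhdsWithin_iff]
      exact ⟨tendsto_const_nhds.prodMk_nhds (hw s),
        Eventually.of_forall fun n => ⟨ht, trivial⟩⟩
    have hc' := hcw.tendsto.comp hpair
    have hc : Tendsto (fun n => S t (S (φ n + s) w₀)) 𝒰 (𝓝 (S t (w s))) := hc'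
    have heq : ∀ᶠ n in (𝒰 : Filter ℕ),
        S t (S (φ n + s) w₀) = S (φ n + (s + t)) w₀ := by
      filter_upwards [(hφtop.eventually_ge_atTop (-s)).filter_mono h𝒰] with n hn
      have h1 : S (t + (φ n + s)) = S t ∘ S (φ n + s) :=
        hSsem t ht (φ n + s) (by linarith)
      have h2 : S t (S (φ n + s) w₀) = S (t + (φ n + s)) w₀ := by
        rw [h1]; rfl
      rw [h2]
      congr 1
      ring
    have hc2 : Tendsto (fun n => S (φ n + (s + t)) w₀) 𝒰 (𝓝 (S t (w s))) :=
      hc.congr' heq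
    exact tendsto_nhds_unique hc2 (hw (s + t))
  -- the functionals agree on the two limit trajectories
  have hFuv : ∀ i, ∀ t : ℝ, F i (u t) = F i (v t) := by
    intro i t
    have h1 : Tendsto (fun n => F i (S (φ n + t) u₀) - F i (S (φ n + t) v₀)) 𝒰
        (𝓝 (F i (u t) - F i (v t))) :=
      (((hFcont i).tendsto (u t)).comp (huT t)).sub
        (((hFcont i).tendsto (v t)).comp (hvT t))
    have h2 : Tendsto (fun n => F i (S (φ n + t) u₀) - F i (S (φ n + t) v₀)) 𝒰
        (𝓝 0) := ((hF i).comp (hshift t)).mono_left h𝒰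
    have := tendsto_nhds_unique h1 h2
    linarith [sub_eq_zero.mp this]
  -- separation implies the trajectories coincide
  have huv : u = v := hsep u v huA hvA (key u₀ u huT) (key v₀ v hvT) hFuv
  -- but the limit at time 0 has norm at least ε, contradiction
  have hnorm : Tendsto (fun n => ‖S (φ n + 0) u₀ - S (φ n + 0) v₀‖) 𝒰
      (𝓝 ‖u 0 - v 0‖) := ((huT 0).sub (hvT 0)).norm
  have hge : ε ≤ ‖u 0 - v 0‖ :=
    ge_of_tendsto hnorm (Eventually.of_forall fun n => by
      simpa [add_zero] using hφε n)
  rw [huv] at hge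
  simp at hge
  linarith
end

section
/- Let A be an N×N real matrix with N simple (pairwise distinct real) eigenvalues. Then there exist vectors l, w ∈ ℝ^N such that all eigenvalues of A + w lᵀ have negative real part. -/
/-!
Eigenvectors for the `N` distinct eigenvalues `μ i` form a basis in which `A` is `diagonal μ`,
and in that basis it suffices to perturb by `c 1ᵀ`. By the matrix determinant lemma, off the
nodes `t ∉ range μ` the characteristic polynomial of `diagonal μ + c 1ᵀ` evaluates to
`∏ (t - μ i) * (1 - ∑ c i / (t - μ i))`. Comparing with the barycentric form of Lagrange
interpolation shows that the choice `c i = w i * (∏ (X - μ j) - q)(μ i)`, with `w` the nodal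
weights, turns it into any prescribed monic `q` of degree `N`; take `q = (X + 1) ^ N`.
-/

open Matrix Polynomial

namespace Matrix

variable {n K : Type*} [Fintype n] [DecidableEq n] [Field K]

theorem det_diagonal_add_vecMulVec {d : n → K} (hd : ∀ i, d i ≠ 0) (a b : n → K) :
    (diagonal d + vecMulVec a b).det = (∏ i, d i) * (1 + ∑ i, a i * b i / d i) := by
  have hdet : IsUnit (diagonal d).det := by
    simpa [det_diagonal, Finset.prod_ne_zero_iff] using hd
  have hinv : (diagonal d)⁻¹ = diagonal fun i => (d i)⁻¹ :=
    inv_eq_left_inv <| by simp [inv_mul_cancel₀ (hd _)]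
  rw [vecMulVec_eq Unit, det_add_replicateCol_mul_replicateRow hdet, det_diagonal, det_unique,
    hinv]
  simp only [Matrix.mul_apply, replicateRow, replicateCol, diagonal_apply, of_apply, mul_ite,
    mul_zero, Finset.sum_ite_eq', Finset.mem_univ, if_true, Matrix.add_apply, one_apply_eq]
  congr 2
  exact Finset.sum_congr rfl fun i _ => by ring

theorem eval_charpoly_diagonal_add_vecMulVec (d a b : n → K) {t : K} (ht : ∀ i, t ≠ d i) :
    (diagonal d + vecMulVec a b).charpoly.eval t
      = (∏ i, (t - d i)) * (1 - ∑ i, a i * b i / (t - d i)) := by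
  have hscalar : scalar n t - (diagonal d + vecMulVec a b)
      = diagonal (fun i => t - d i) + vecMulVec (-a) b := by
    ext i j
    by_cases hij : i = j <;> simp [hij, vecMulVec_apply]; ring
  rw [eval_charpoly, hscalar, det_diagonal_add_vecMulVec (fun i => sub_ne_zero.2 (ht i))]
  simp [neg_div, Finset.sum_neg_distrib, sub_eq_add_neg]

open Lagrange in
theorem exists_charpoly_diagonal_add_vecMulVec_eq [Infinite K] {μ : n → K}
    (hμ : Function.Injective μ) {q : K[X]} (hq : q.Monic) (hdeg : q.natDegree = Fintype.card n) :
    ∃ c : n → K, (diagonal μ + vecMulVec c 1).charpoly = q := by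
  set f := nodal Finset.univ μ - q
  have hf : f.degree < (Finset.univ : Finset n).card := by
    rw [← degree_nodal (v := μ)]
    refine degree_sub_lt_left ?_ nodal_ne_zero (by rw [nodal_monic.leadingCoeff, hq.leadingCoeff])
    rw [degree_nodal, degree_eq_natDegree hq.ne_zero, hdeg, Finset.card_univ]
  refine ⟨fun i => nodalWeight Finset.univ μ i * f.eval (μ i), ?_⟩
  refine eq_of_infinite_eval_eq _ _ ((Set.finite_range μ).infinite_compl.mono fun t ht => ?_)
  have ht' : ∀ i, t ≠ μ i := fun i h => ht ⟨i, h.symm⟩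
  have hbarycentric := eval_interpolate_not_at_node (fun i => f.eval (μ i)) (s := Finset.univ)
    (x := t) (fun i _ => ht' i)
  rw [← eq_interpolate hμ.injOn hf, eval_nodal] at hbarycentric
  have hq_eval : q.eval t = (∏ i, (t - μ i)) - f.eval t := by
    rw [eval_sub, eval_nodal, sub_sub_cancel]
  rw [Set.mem_ofPred_eq, eval_charpoly_diagonal_add_vecMulVec μ _ _ ht', hq_eval, hbarycentric,
    mul_sub, mul_one]
  congr 2
  exact Finset.sum_congr rfl fun i _ => by simp only [Pi.one_apply]; ring

open Module.End in
theorem exists_units_conj_eq_diagonal {A : Matrix n n K} {μ : n → K} (hμ : Function.Injective μ)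
    (hchar : A.charpoly = ∏ i, (X - C (μ i))) :
    ∃ P : (Matrix n n K)ˣ, A = P * diagonal μ * P⁻¹ := by
  have hev (i : n) : HasEigenvalue (toLin' A) (μ i) := by
    rw [hasEigenvalue_iff_isRoot_charpoly, charpoly_toLin', hchar]
    exact (isRoot_prod _ _ _).2 ⟨i, Finset.mem_univ i, root_X_sub_C.2 rfl⟩
  choose v hv using fun i => (hev i).exists_hasEigenvector
  have hP : IsUnit (of v)ᵀ :=
    linearIndependent_cols_iff_isUnit.1 (eigenvectors_linearIndependent' _ μ hμ v hv)
  refine ⟨hP.unit, (Units.eq_mul_inv_iff_mul_eq _).2 ?_⟩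
  ext i j
  rw [mul_diagonal]
  simpa [Matrix.mul_apply, mulVec, dotProduct, mul_comm] using congrFun (hv j).apply_eq_smul i

theorem exists_charpoly_add_vecMulVec_eq [Infinite K] {A : Matrix n n K} {μ : n → K}
    (hμ : Function.Injective μ) (hchar : A.charpoly = ∏ i, (X - C (μ i))) {q : K[X]}
    (hq : q.Monic) (hdeg : q.natDegree = Fintype.card n) :
    ∃ l w : n → K, (A + vecMulVec w l).charpoly = q := by
  obtain ⟨P, rfl⟩ := exists_units_conj_eq_diagonal hμ hchar
  obtain ⟨c, hc⟩ := exists_charpoly_diagonal_add_vecMulVec_eq hμ hq hdeg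
  refine ⟨1 ᵥ* (↑P⁻¹ : Matrix n n K), (P : Matrix n n K) *ᵥ c, ?_⟩
  rw [← hc, ← charpoly_units_conj P (diagonal μ + vecMulVec c 1), mul_add, add_mul,
    mul_vecMulVec, vecMulVec_mul, coe_units_inv]

end Matrix

/-- Rank-one stabilization of a matrix with simple real spectrum: if the `N×N` real
matrix `A` has `N` pairwise distinct real eigenvalues (its characteristic polynomial
splits with distinct real roots), then there exist vectors `l, w ∈ ℝ^N` such that every
eigenvalue of `A + w lᵀ` has negative real part. -/
theorem rank_one_stabilization
    (N : ℕ) (A : Matrix (Fin N) (Fin N) ℝ)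
    (μ : Fin N → ℝ) (hμ : Function.Injective μ)
    (hchar : A.charpoly = ∏ i : Fin N, (X - C (μ i))) :
    ∃ l w : Fin N → ℝ, ∀ z : ℂ,
      (Polynomial.aeval z) ((A + vecMulVec w l).charpoly) = 0 → z.re < 0 := by
  obtain ⟨l, w, hlw⟩ := exists_charpoly_add_vecMulVec_eq hμ hchar ((monic_X_add_C 1).pow N)
    (by rw [natDegree_pow, natDegree_X_add_C, mul_one, Fintype.card_fin])
  refine ⟨l, w, fun z hz => ?_⟩
  rw [hlw, map_pow] at hz
  have hz1 : z + 1 = 0 := by simpa using (pow_eq_zero_iff'.1 hz).1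
  rw [eq_neg_of_add_eq_zero_left hz1]
  norm_num
end

section
/- Let u₊¹, u₊² ∈ C_b(ℝ₋, H) and let v : ℝ₋ → H satisfy (d/dt)‖v(t)‖²_H + β‖v(t)‖²_H ≤ C‖u₊¹(t) − u₊²(t)‖²_H for all t ≤ 0, with v bounded on ℝ₋ and β, C > 0. Then for all t ≤ 0, ‖v(t)‖²_H ≤ C_β sup_{s ≤ 0} { e^{−β(t−s)/2} ‖u₊¹(s) − u₊²(s)‖²_H } for some constant C_β depending only on β and C. In particular ‖v‖_{C_{e^{βt/4}}(ℝ₋,H)} ≤ K‖u₊¹ − u₊²‖_{C_{e^{βt/4}}(ℝ₋,H)}. -/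
/-- Weighted Gronwall estimate on `ℝ₋`: if `v` is bounded on `ℝ₋` and
`(d/dt)‖v(t)‖² + β‖v(t)‖² ≤ C‖u₁(t) − u₂(t)‖²` for `t ≤ 0`, then
`‖v(t)‖² ≤ C_β sup_{s ≤ 0} e^{−β(t−s)/2}‖u₁(s) − u₂(s)‖²` for a constant `C_β`
depending only on `β` and `C`; in particular `v` is controlled by `u₁ − u₂` in the
exponentially weighted norm `sup_{t ≤ 0} e^{βt/4}‖·‖`. -/
theorem weighted_gronwall_neg_halfline
    {H : Type*} [NormedAddCommGroup H]
    (β C : ℝ) (hβ : 0 < β) (hC : 0 < C)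
    (u₁ u₂ v : ℝ → H) (d : ℝ → ℝ)
    (hu₁ : ∃ M : ℝ, ∀ t ≤ (0:ℝ), ‖u₁ t‖ ≤ M)
    (hu₂ : ∃ M : ℝ, ∀ t ≤ (0:ℝ), ‖u₂ t‖ ≤ M)
    (hvb : ∃ M : ℝ, ∀ t ≤ (0:ℝ), ‖v t‖ ≤ M)
    (hderiv : ∀ t ≤ (0:ℝ), HasDerivWithinAt (fun s => ‖v s‖ ^ 2) (d t) (Set.Iic 0) t)
    (hineq : ∀ t ≤ (0:ℝ), d t + β * ‖v t‖ ^ 2 ≤ C * ‖u₁ t - u₂ t‖ ^ 2) :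
    (∃ Cβ > (0:ℝ), ∀ t ≤ (0:ℝ), ∀ D : ℝ,
        (∀ s ≤ (0:ℝ), Real.exp (-β * (t - s) / 2) * ‖u₁ s - u₂ s‖ ^ 2 ≤ D) →
        ‖v t‖ ^ 2 ≤ Cβ * D) ∧
    ∃ K > (0:ℝ), ∀ D : ℝ,
        (∀ s ≤ (0:ℝ), Real.exp (β * s / 4) * ‖u₁ s - u₂ s‖ ≤ D) →
        ∀ t ≤ (0:ℝ), Real.exp (β * t / 4) * ‖v t‖ ≤ K * D := by
  obtain ⟨Mv, hMv⟩ := hvb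
  have hMv0 : 0 ≤ Mv := le_trans (norm_nonneg _) (hMv 0 le_rfl)
  have cont_v2 : ContinuousOn (fun s => ‖v s‖ ^ 2) (Set.Iic (0:ℝ)) :=
    fun s hs => (hderiv s hs).continuousWithinAt
  -- the key estimate
  have key : ∀ t ≤ (0:ℝ), ∀ D : ℝ,
      (∀ s ≤ (0:ℝ), Real.exp (-β * (t - s) / 2) * ‖u₁ s - u₂ s‖ ^ 2 ≤ D) →
      ‖v t‖ ^ 2 ≤ (2 * C / β) * D := by
    intro t ht D hD
    have hD0 : 0 ≤ D := le_trans (by positivity) (hD t ht)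
    set c : ℝ := 2 * C * D / β * Real.exp (β * t / 2) with hc_def
    set F : ℝ → ℝ := fun s => Real.exp (β * s) * ‖v s‖ ^ 2 - c * Real.exp (β * s / 2)
      with hF_def
    -- F is antitone on Icc (-M) t for any M ≥ -t
    have main : ∀ M : ℝ, 0 ≤ M → -M ≤ t →
        ‖v t‖ ^ 2 ≤ Real.exp (-β * (M + t)) * Mv ^ 2 + 2 * C * D / β := by
      intro M hM0 hMt
      have hsub : Set.Icc (-M) t ⊆ Set.Iic (0:ℝ) := fun x hx => le_trans hx.2 ht
      have hcont : ContinuousOn F (Set.Icc (-M) t) := by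
        apply ContinuousOn.sub
        · exact ((Real.continuous_exp.comp (continuous_const.mul continuous_id)).continuousOn).mul
            (cont_v2.mono hsub)
        · exact continuousOn_const.mul
            (Real.continuous_exp.comp ((continuous_const.mul continuous_id).div_const 2)).continuousOn
      have hderivF : ∀ x ∈ interior (Set.Icc (-M) t),
          HasDerivAt F (Real.exp (β * x) * β * ‖v x‖ ^ 2 + Real.exp (β * x) * d x
            - c * (Real.exp (β * x / 2) * (β / 2))) x := by
        intro x hx
        rw [interior_Icc] at hx
        have hx0 : x < 0 := lt_of_lt_of_le hx.2 ht
        have hdv : HasDerivAt (fun s => ‖v s‖ ^ 2) (d x) x :=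
          (hderiv x hx0.le).hasDerivAt (Iic_mem_nhds hx0)
        have h1 : HasDerivAt (fun s : ℝ => β * s) β x := by
          simpa using (hasDerivAt_id x).const_mul β
        have h2 : HasDerivAt (fun s : ℝ => β * s / 2) (β / 2) x := h1.div_const 2
        exact (h1.exp.mul hdv).sub ((h2.exp).const_mul c)
      have hnonpos : ∀ x ∈ interior (Set.Icc (-M) t),
          Real.exp (β * x) * β * ‖v x‖ ^ 2 + Real.exp (β * x) * d x
            - c * (Real.exp (β * x / 2) * (β / 2)) ≤ 0 := by
        intro x hx
        rw [interior_Icc] at hx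
        have hx0 : x < 0 := lt_of_lt_of_le hx.2 ht
        have hb0 := hD x hx0.le
        have hexp1 : Real.exp (β * (t - x) / 2) * Real.exp (-β * (t - x) / 2) = 1 := by
          rw [← Real.exp_add, show β * (t - x) / 2 + -β * (t - x) / 2 = 0 by ring, Real.exp_zero]
        have hb1 : ‖u₁ x - u₂ x‖ ^ 2 ≤ D * Real.exp (β * (t - x) / 2) := by
          have h := mul_le_mul_of_nonneg_left hb0 (Real.exp_pos (β * (t - x) / 2)).le
          rw [← mul_assoc, hexp1, one_mul] at h
          linarith [h]
        have hineq' := hineq x hx0.le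
        have hid : Real.exp (β * x) * Real.exp (β * (t - x) / 2)
            = Real.exp (β * t / 2) * Real.exp (β * x / 2) := by
          rw [← Real.exp_add, ← Real.exp_add]; ring_nf
        have hc1 : c * (Real.exp (β * x / 2) * (β / 2))
            = C * D * (Real.exp (β * t / 2) * Real.exp (β * x / 2)) := by
          rw [hc_def]; field_simp
        have e0 : (0:ℝ) < Real.exp (β * x) := Real.exp_pos _
        have s1 : Real.exp (β * x) * (d x + β * ‖v x‖ ^ 2)
            ≤ Real.exp (β * x) * (C * ‖u₁ x - u₂ x‖ ^ 2) :=
          mul_le_mul_of_nonneg_left hineq' e0.le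
        have s2 : Real.exp (β * x) * (C * ‖u₁ x - u₂ x‖ ^ 2)
            ≤ Real.exp (β * x) * (C * (D * Real.exp (β * (t - x) / 2))) :=
          mul_le_mul_of_nonneg_left (mul_le_mul_of_nonneg_left hb1 hC.le) e0.le
        have s3 : Real.exp (β * x) * (C * (D * Real.exp (β * (t - x) / 2)))
            = C * D * (Real.exp (β * t / 2) * Real.exp (β * x / 2)) := by
          rw [← hid]; ring
        linarith [s1, s2, s3, hc1]
      have hanti : AntitoneOn F (Set.Icc (-M) t) := by
        apply antitoneOn_of_deriv_nonpos (convex_Icc _ _) hcont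
        · intro x hx
          exact ((hderivF x hx).differentiableAt.differentiableWithinAt)
        · intro x hx
          rw [(hderivF x hx).deriv]
          exact hnonpos x hx
      have hFle : F t ≤ F (-M) :=
        hanti (Set.left_mem_Icc.mpr (by linarith)) (Set.right_mem_Icc.mpr (by linarith)) hMt
      -- unpack
      have hvM : ‖v (-M)‖ ^ 2 ≤ Mv ^ 2 := by
        have := hMv (-M) (by linarith)
        nlinarith [norm_nonneg (v (-M))]
      have hexp2 : (0:ℝ) < Real.exp (-β * M / 2) := Real.exp_pos _
      have hFt : Real.exp (β * t) * ‖v t‖ ^ 2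
          ≤ Real.exp (β * (-M)) * ‖v (-M)‖ ^ 2 + c * Real.exp (β * t / 2) := by
        have hcpos : 0 ≤ c := by
          rw [hc_def]; positivity
        have hepos : (0:ℝ) < Real.exp (β * -M / 2) := Real.exp_pos _
        have := hFle
        simp only [hF_def] at this
        nlinarith [mul_nonneg hcpos hepos.le]
      -- divide by exp (β t)
      have he : (0:ℝ) < Real.exp (β * t) := Real.exp_pos _
      have key1 : Real.exp (β * (-M)) * ‖v (-M)‖ ^ 2 ≤ Real.exp (β * (-M)) * Mv ^ 2 :=
        mul_le_mul_of_nonneg_left hvM (Real.exp_pos _).le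
      have key2 : Real.exp (β * t) * ‖v t‖ ^ 2
          ≤ Real.exp (β * (-M)) * Mv ^ 2 + c * Real.exp (β * t / 2) := by linarith
      have hccomp : c * Real.exp (β * t / 2) = 2 * C * D / β * Real.exp (β * t) := by
        rw [hc_def, mul_assoc, ← Real.exp_add]
        ring_nf
      rw [hccomp] at key2
      have hfin : ‖v t‖ ^ 2 ≤ Real.exp (β * (-M)) / Real.exp (β * t) * Mv ^ 2 + 2 * C * D / β := by
        rw [div_mul_eq_mul_div, ← sub_nonneg]
        have : Real.exp (β * (-M)) * Mv ^ 2 / Real.exp (β * t) + 2 * C * D / β - ‖v t‖ ^ 2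
            = (Real.exp (β * (-M)) * Mv ^ 2 + 2 * C * D / β * Real.exp (β * t)
              - Real.exp (β * t) * ‖v t‖ ^ 2) / Real.exp (β * t) := by
          field_simp
        rw [this]
        apply div_nonneg _ he.le
        linarith
      have hquot : Real.exp (β * (-M)) / Real.exp (β * t) = Real.exp (-β * (M + t)) := by
        rw [← Real.exp_sub]; ring_nf
      rwa [hquot] at hfin
    -- take the limit M → ∞
    have htend : Filter.Tendsto (fun M : ℝ => Real.exp (-β * (M + t)) * Mv ^ 2 + 2 * C * D / β)
        Filter.atTop (nhds (2 * C * D / β)) := by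
      have h0 : Filter.Tendsto (fun M : ℝ => β * (M + t)) Filter.atTop Filter.atTop := by
        apply Filter.Tendsto.const_mul_atTop hβ
        exact Filter.tendsto_atTop_add_const_right _ t Filter.tendsto_id
      have h1 : Filter.Tendsto (fun M : ℝ => -β * (M + t)) Filter.atTop Filter.atBot := by
        have := Filter.tendsto_neg_atTop_atBot.comp h0
        exact this.congr fun M => (neg_mul β (M + t)).symm
      have h2 : Filter.Tendsto (fun M : ℝ => Real.exp (-β * (M + t))) Filter.atTop (nhds 0) :=
        Real.tendsto_exp_atBot.comp h1
      have h3 : Filter.Tendsto (fun M : ℝ => Real.exp (-β * (M + t)) * Mv ^ 2)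
          Filter.atTop (nhds 0) := by
        simpa using h2.mul_const (Mv ^ 2)
      simpa using h3.add_const (2 * C * D / β)
    have hle : ‖v t‖ ^ 2 ≤ 2 * C * D / β := by
      apply ge_of_tendsto htend
      filter_upwards [Filter.eventually_ge_atTop (max 0 (-t))] with M hM
      exact main M (le_trans (le_max_left _ _) hM) (by
        have := le_trans (le_max_right 0 (-t)) hM; linarith)
    linarith [hle, show 2 * C * D / β = 2 * C / β * D by ring]
  constructor
  · refine ⟨2 * C / β, by positivity, fun t ht D hD => key t ht D hD⟩
  · refine ⟨Real.sqrt (2 * C / β), Real.sqrt_pos.mpr (by positivity), ?_⟩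
    intro D hDw t ht
    have hD0 : 0 ≤ D := le_trans (by positivity) (hDw 0 le_rfl)
    have hkey := key t ht (D ^ 2 * Real.exp (-β * t / 2)) ?_
    · have hsq : (Real.exp (β * t / 4) * ‖v t‖) ^ 2 ≤ (Real.sqrt (2 * C / β) * D) ^ 2 := by
        have h1 : (Real.sqrt (2 * C / β) * D) ^ 2 = 2 * C / β * D ^ 2 := by
          rw [mul_pow, Real.sq_sqrt (by positivity)]
        have h2 : (Real.exp (β * t / 4)) ^ 2 = Real.exp (β * t / 2) := by
          rw [← Real.exp_nat_mul]; ring_nf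
        have h3 : Real.exp (β * t / 2) * Real.exp (-β * t / 2) = 1 := by
          rw [← Real.exp_add, show β * t / 2 + -β * t / 2 = 0 by ring, Real.exp_zero]
        rw [mul_pow, h1, h2]
        calc Real.exp (β * t / 2) * ‖v t‖ ^ 2
            ≤ Real.exp (β * t / 2) * (2 * C / β * (D ^ 2 * Real.exp (-β * t / 2))) :=
              mul_le_mul_of_nonneg_left hkey (Real.exp_pos _).le
          _ = 2 * C / β * D ^ 2 * (Real.exp (β * t / 2) * Real.exp (-β * t / 2)) := by ring
          _ = 2 * C / β * D ^ 2 := by rw [h3, mul_one]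
      have := Real.sqrt_le_sqrt hsq
      rwa [Real.sqrt_sq (by positivity), Real.sqrt_sq
        (mul_nonneg (Real.sqrt_nonneg _) hD0)] at this
    · intro s hs
      have hbd := hDw s hs
      have hsq : ‖u₁ s - u₂ s‖ ^ 2 ≤ D ^ 2 * Real.exp (-β * s / 2) := by
        have h2 : (Real.exp (β * s / 4)) ^ 2 = Real.exp (β * s / 2) := by
          rw [← Real.exp_nat_mul]; ring_nf
        have h4 : Real.exp (β * s / 2) * Real.exp (-β * s / 2) = 1 := by
          rw [← Real.exp_add, show β * s / 2 + -β * s / 2 = 0 by ring, Real.exp_zero]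
        have hsq0 : Real.exp (β * s / 2) * ‖u₁ s - u₂ s‖ ^ 2 ≤ D ^ 2 := by
          rw [← h2]
          nlinarith [norm_nonneg (u₁ s - u₂ s), Real.exp_pos (β * s / 4),
            mul_nonneg (Real.exp_pos (β * s / 4)).le (norm_nonneg (u₁ s - u₂ s))]
        have := mul_le_mul_of_nonneg_left hsq0 (Real.exp_pos (-β * s / 2)).le
        rw [← mul_assoc] at this
        nlinarith [this, h4]
      calc Real.exp (-β * (t - s) / 2) * ‖u₁ s - u₂ s‖ ^ 2
          ≤ Real.exp (-β * (t - s) / 2) * (D ^ 2 * Real.exp (-β * s / 2)) :=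
            mul_le_mul_of_nonneg_left hsq (Real.exp_pos _).le
        _ = D ^ 2 * (Real.exp (-β * (t - s) / 2) * Real.exp (-β * s / 2)) := by ring
        _ = D ^ 2 * Real.exp (-β * t / 2) := by
            rw [← Real.exp_add]; ring_nf
end
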